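/- arXiv:1508.00193 — 4 statements merged into one kernel-verified Lean document; each statement's English description precedes it below -/
import Mathlib

section
/- Let $S, T \in \mathbb{R}^{d\times d}$ be symmetric positive semidefinite matrices. Then there exists a polynomial $p$ such that $\det((\lambda-1)^2 I + (2\lambda-1)S + (\lambda-1)T) = (\lambda-1)^l p(\lambda)$ as polynomials in $\lambda$, where $l = 2d - \mathrm{Rank}(S) - \mathrm{Rank}(S+T)$, and $p(1) > 0$. -/
open Matrix Polynomial

section Helpers
lemma gram_posDef {d : ℕ} {κ : Type*} [Fintype κ] [DecidableEq κ]
    {A : Matrix (Fin d) (Fin d) ℝ} (hA : A.PosSemidef)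
    (W : Matrix κ (Fin d) ℝ)
    (h : ∀ x : κ → ℝ, A *ᵥ (Wᵀ *ᵥ x) = 0 → x = 0) :
    Matrix.PosDef (W * A * Wᵀ) := by
  have hsym : (W * A * Wᵀ).IsHermitian := by
    have hh := hA.1
    unfold Matrix.IsHermitian at *
    simp only [conjTranspose_mul, conjTranspose_eq_transpose_of_trivial] at *
    rw [transpose_mul, transpose_mul, transpose_transpose, hh, Matrix.mul_assoc]
  refine posDef_iff_dotProduct_mulVec.mpr ⟨hsym, fun x hx => ?_⟩
  have hW : x ᵥ* W = Wᵀ *ᵥ x := by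
    rw [← transpose_transpose W, vecMul_transpose, transpose_transpose]
  have key : star x ⬝ᵥ (W * A * Wᵀ) *ᵥ x = star (Wᵀ *ᵥ x) ⬝ᵥ A *ᵥ (Wᵀ *ᵥ x) := by
    rw [star_trivial, star_trivial, ← mulVec_mulVec, ← mulVec_mulVec,
      dotProduct_mulVec, hW]
  rw [key]
  rcases lt_or_eq_of_le (hA.dotProduct_mulVec_nonneg (Wᵀ *ᵥ x)) with h1 | h1
  · exact h1
  · exact absurd (h x ((hA.dotProduct_mulVec_zero_iff _).mp h1.symm)) hx

lemma conj_entry {d : ℕ} {κ : Type*} [Fintype κ]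
    (A : Matrix (Fin d) (Fin d) ℝ) (W : Matrix κ (Fin d) ℝ) (k l : κ) :
    (W * A * Wᵀ) k l = W k ⬝ᵥ (A *ᵥ W l) := by
  simp only [mul_apply, dotProduct, mulVec, transpose_apply, Finset.sum_mul, Finset.mul_sum]
  rw [Finset.sum_comm]
  apply Finset.sum_congr rfl; intro i _
  apply Finset.sum_congr rfl; intro j _
  ring

lemma dot_symm {d : ℕ} {A : Matrix (Fin d) (Fin d) ℝ} (hA : Aᵀ = A) (u w : Fin d → ℝ) :
    u ⬝ᵥ (A *ᵥ w) = w ⬝ᵥ (A *ᵥ u) := by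
  rw [dotProduct_mulVec]
  rw [show u ᵥ* A = A *ᵥ u by rw [← hA, mulVec_transpose, hA]]
  exact dotProduct_comm _ _

lemma transpose_mulVec_sum {d : ℕ} {κ : Type*} [Fintype κ] (w : κ → Fin d → ℝ) (x : κ → ℝ) :
    (Matrix.of w)ᵀ *ᵥ x = ∑ k, x k • w k := by
  ext j
  simp [mulVec, dotProduct, Finset.sum_apply, mul_comm]
end Helpers

set_option maxHeartbeats 2000000 in
/-- For symmetric psd `S, T`, the polynomial
`det((λ-1)²I + (2λ-1)S + (λ-1)T)` factors as `(λ-1)^l p(λ)` with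
`l = 2d - rank S - rank (S+T)` and `p(1) > 0`. -/
theorem stmt_1 (d : ℕ) (S T : Matrix (Fin d) (Fin d) ℝ)
    (hS : S.PosSemidef) (hT : T.PosSemidef) :
    ∃ p : Polynomial ℝ,
      (((X - 1 : Polynomial ℝ) ^ 2 • (1 : Matrix (Fin d) (Fin d) (Polynomial ℝ))
          + (2 * X - 1 : Polynomial ℝ) • S.map Polynomial.C
          + (X - 1 : Polynomial ℝ) • T.map Polynomial.C).det
        = (X - 1 : Polynomial ℝ) ^ (2 * d - S.rank - (S + T).rank) * p) ∧ 0 < p.eval 1 := by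
  classical
  set μ : ℝ[X] := X - 1 with hμ
  set B : Matrix (Fin d) (Fin d) ℝ := S + S + T with hBdef
  have hSt : Sᵀ = S := by
    rw [← conjTranspose_eq_transpose_of_trivial]; exact hS.1
  have hTt : Tᵀ = T := by
    rw [← conjTranspose_eq_transpose_of_trivial]; exact hT.1
  -- key kernel facts
  have key0 : ∀ z : Fin d → ℝ, z ⬝ᵥ S *ᵥ z + z ⬝ᵥ T *ᵥ z = 0 →
      S *ᵥ z = 0 ∧ T *ᵥ z = 0 := by
    intro z hz
    have h1 : (0:ℝ) ≤ z ⬝ᵥ S *ᵥ z := by simpa using hS.dotProduct_mulVec_nonneg z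
    have h2 : (0:ℝ) ≤ z ⬝ᵥ T *ᵥ z := by simpa using hT.dotProduct_mulVec_nonneg z
    constructor
    · exact (hS.dotProduct_mulVec_zero_iff z).mp (by rw [star_trivial]; linarith)
    · exact (hT.dotProduct_mulVec_zero_iff z).mp (by rw [star_trivial]; linarith)
  have keyST : ∀ z : Fin d → ℝ, (S + T) *ᵥ z = 0 → S *ᵥ z = 0 ∧ T *ᵥ z = 0 := by
    intro z hz
    apply key0
    have h : z ⬝ᵥ (S + T) *ᵥ z = 0 := by rw [hz, dotProduct_zero]
    simpa [add_mulVec, dotProduct_add] using h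
  have keyB : ∀ z : Fin d → ℝ, B *ᵥ z = 0 → S *ᵥ z = 0 ∧ T *ᵥ z = 0 := by
    intro z hz
    have h0 : z ⬝ᵥ B *ᵥ z = 0 := by rw [hz, dotProduct_zero]
    have h1 : (0:ℝ) ≤ z ⬝ᵥ S *ᵥ z := by simpa using hS.dotProduct_mulVec_nonneg z
    have h2 : (0:ℝ) ≤ z ⬝ᵥ T *ᵥ z := by simpa using hT.dotProduct_mulVec_nonneg z
    have h3 : z ⬝ᵥ S *ᵥ z + z ⬝ᵥ S *ᵥ z + z ⬝ᵥ T *ᵥ z = 0 := by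
      simpa [hBdef, add_mulVec, dotProduct_add] using h0
    exact key0 z (by linarith)
  -- submodules
  set K2 : Submodule ℝ (Fin d → ℝ) := LinearMap.ker (S + T).mulVecLin with hK2def
  set K1 : Submodule ℝ (Fin d → ℝ) := LinearMap.ker S.mulVecLin with hK1def
  have memK2 : ∀ z, z ∈ K2 ↔ (S + T) *ᵥ z = 0 := fun z => by
    rw [hK2def, LinearMap.mem_ker, mulVecLin_apply]
  have memK1 : ∀ z, z ∈ K1 ↔ S *ᵥ z = 0 := fun z => by
    rw [hK1def, LinearMap.mem_ker, mulVecLin_apply]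
  have hK21 : K2 ≤ K1 := by
    intro z hz
    rw [memK1]
    exact (keyST z ((memK2 z).mp hz)).1
  obtain ⟨W1', hW1'⟩ := Submodule.exists_isCompl K2
  obtain ⟨W2, hW2⟩ := Submodule.exists_isCompl K1
  set W1 : Submodule ℝ (Fin d → ℝ) := W1' ⊓ K1 with hW1def
  have hW1K1 : W1 ≤ K1 := inf_le_right
  have hdisj1 : Disjoint K2 W1 := hW1'.disjoint.mono_right inf_le_left
  have hsup1 : K2 ⊔ W1 = K1 := by
    rw [hW1def, ← sup_inf_assoc_of_le _ hK21, hW1'.codisjoint.eq_top, top_inf_eq]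
  have hdisj2 : Disjoint K1 W2 := hW2.disjoint
  -- dimensions
  set n0 := Module.finrank ℝ K2 with hn0
  set n1 := Module.finrank ℝ W1 with hn1
  set n2 := Module.finrank ℝ W2 with hn2
  have hfr : Module.finrank ℝ (Fin d → ℝ) = d := by simp
  have hd1 : n0 + n1 = Module.finrank ℝ K1 := by
    have h := Submodule.finrank_sup_add_finrank_inf_eq K2 W1
    rw [hsup1, hdisj1.eq_bot, finrank_bot, add_zero] at h
    omega
  have hd2 : Module.finrank ℝ K1 + n2 = d := by
    have h := Submodule.finrank_sup_add_finrank_inf_eq K1 W2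
    rw [hW2.codisjoint.eq_top, hdisj2.eq_bot, finrank_bot, add_zero, finrank_top, hfr] at h
    omega
  have hrankS : S.rank + Module.finrank ℝ K1 = d := by
    rw [Matrix.rank]
    have h := LinearMap.finrank_range_add_finrank_ker S.mulVecLin
    rw [hfr] at h
    exact h
  have hrankST : (S + T).rank + n0 = d := by
    rw [Matrix.rank]
    have h := LinearMap.finrank_range_add_finrank_ker (S + T).mulVecLin
    rw [hfr] at h
    exact h
  -- bases
  set b0 := Module.finBasis ℝ K2 with hb0
  set b1 := Module.finBasis ℝ W1 with hb1
  set b2 := Module.finBasis ℝ W2 with hb2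
  set ι := (Fin n0 ⊕ (Fin n1 ⊕ Fin n2)) with hι
  set e : ι → (Fin d → ℝ) := Sum.elim (fun i => ((b0 i : Fin d → ℝ)))
    (Sum.elim (fun i => ((b1 i : Fin d → ℝ))) (fun i => ((b2 i : Fin d → ℝ)))) with he
  have he0 : ∀ i, e (Sum.inl i) ∈ K2 := fun i => (b0 i).2
  have he1 : ∀ i, e (Sum.inr (Sum.inl i)) ∈ W1 := fun i => (b1 i).2
  have he2 : ∀ i, e (Sum.inr (Sum.inr i)) ∈ W2 := fun i => (b2 i).2
  -- spans
  have hsp0 : Submodule.span ℝ (Set.range fun i => ((b0 i : Fin d → ℝ))) = K2 := by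
    have h : (fun i => ((b0 i : Fin d → ℝ))) = K2.subtype ∘ b0 := rfl
    rw [h, Set.range_comp, Submodule.span_image, b0.span_eq, Submodule.map_top,
      Submodule.range_subtype]
  have hsp1 : Submodule.span ℝ (Set.range fun i => ((b1 i : Fin d → ℝ))) = W1 := by
    have h : (fun i => ((b1 i : Fin d → ℝ))) = W1.subtype ∘ b1 := rfl
    rw [h, Set.range_comp, Submodule.span_image, b1.span_eq, Submodule.map_top,
      Submodule.range_subtype]
  have hsp2 : Submodule.span ℝ (Set.range fun i => ((b2 i : Fin d → ℝ))) = W2 := by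
    have h : (fun i => ((b2 i : Fin d → ℝ))) = W2.subtype ∘ b2 := rfl
    rw [h, Set.range_comp, Submodule.span_image, b2.span_eq, Submodule.map_top,
      Submodule.range_subtype]
  -- linear independence
  have li0 : LinearIndependent ℝ (fun i => ((b0 i : Fin d → ℝ))) :=
    b0.linearIndependent.map' K2.subtype (Submodule.ker_subtype K2)
  have li1 : LinearIndependent ℝ (fun i => ((b1 i : Fin d → ℝ))) :=
    b1.linearIndependent.map' W1.subtype (Submodule.ker_subtype W1)
  have li2 : LinearIndependent ℝ (fun i => ((b2 i : Fin d → ℝ))) :=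
    b2.linearIndependent.map' W2.subtype (Submodule.ker_subtype W2)
  have li12 : LinearIndependent ℝ (Sum.elim (fun i => ((b1 i : Fin d → ℝ)))
      (fun i => ((b2 i : Fin d → ℝ)))) := by
    apply li1.sum_type li2
    rw [hsp1, hsp2]
    exact hdisj2.mono_left hW1K1
  have hdisj012 : Disjoint K2 (W1 ⊔ W2) := by
    rw [disjoint_iff_inf_le]
    rintro x ⟨hx2, hx12⟩
    obtain ⟨y, hy, z, hz, rfl⟩ := Submodule.mem_sup.mp hx12
    have hzK1 : z ∈ K1 := by
      have h1 : y + z ∈ K1 := hK21 hx2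
      have h2 : y ∈ K1 := hW1K1 hy
      simpa using K1.sub_mem h1 h2
    have hz0 : z = 0 := by
      have h := hdisj2.le_bot ⟨hzK1, hz⟩
      simpa using h
    subst hz0
    rw [add_zero] at hx2 ⊢
    have h := hdisj1.le_bot ⟨hx2, hy⟩
    simpa using h
  have li : LinearIndependent ℝ e := by
    apply li0.sum_type li12
    rw [hsp0, Set.Sum.elim_range, Submodule.span_union, hsp1, hsp2]
    exact hdisj012
  have hcard : Fintype.card ι = d := by
    simp only [hι, Fintype.card_sum, Fintype.card_fin]
    omega
  have σ : Fin d ≃ ι := Fintype.equivOfCardEq (by rw [hcard, Fintype.card_fin])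
  -- matrices
  set V : Matrix ι (Fin d) ℝ := Matrix.of e with hV
  set Vsq : Matrix (Fin d) (Fin d) ℝ := V.submatrix σ id with hVsq
  have hVsqunit : IsUnit Vsq.det := by
    rw [← Matrix.isUnit_iff_isUnit_det]
    rw [← Matrix.linearIndependent_rows_iff_isUnit]
    exact li.comp σ σ.injective
  have hdet0 : Vsq.det ≠ 0 := hVsqunit.ne_zero
  set S' : Matrix ι ι ℝ := V * S * Vᵀ with hS'
  set B' : Matrix ι ι ℝ := V * B * Vᵀ with hB'
  set G : Matrix ι ι ℝ := V * Vᵀ with hG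
  -- statement matrix decomposition
  set Mst : Matrix (Fin d) (Fin d) ℝ[X] := S.map C + μ • B.map C + μ ^ 2 • 1 with hMst
  have hM : ((X - 1 : ℝ[X]) ^ 2 • (1 : Matrix (Fin d) (Fin d) ℝ[X])
      + (2 * X - 1 : ℝ[X]) • S.map C + (X - 1 : ℝ[X]) • T.map C) = Mst := by
    ext i j
    simp only [hMst, hμ, hBdef, Matrix.add_apply, Matrix.smul_apply, Matrix.map_apply,
      Matrix.one_apply, Matrix.add_apply, map_add, smul_eq_mul]
    split_ifs <;> ring
  -- the conjugated matrix
  set Q : Matrix ι ι ℝ[X] := (V.map C) * Mst * (V.map C)ᵀ with hQdef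
  have hconj : ∀ A : Matrix (Fin d) (Fin d) ℝ,
      (V.map C) * A.map C * (V.map C)ᵀ = (V * A * Vᵀ).map C := by
    intro A
    rw [← Matrix.transpose_map, ← Matrix.map_mul, ← Matrix.map_mul]
  have hQ : Q = S'.map C + μ • B'.map C + μ ^ 2 • G.map C := by
    rw [hQdef, hMst]
    calc (V.map C) * (S.map C + μ • B.map C + μ ^ 2 • 1) * (V.map C)ᵀ
        = V.map C * S.map C * (V.map C)ᵀ + μ • (V.map C * B.map C * (V.map C)ᵀ)
          + μ ^ 2 • (V.map C * (V.map C)ᵀ) := by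
          rw [Matrix.mul_add, Matrix.mul_add, Matrix.add_mul, Matrix.add_mul,
            Matrix.mul_smul, Matrix.smul_mul, Matrix.mul_smul, Matrix.smul_mul,
            Matrix.mul_one]
      _ = S'.map C + μ • B'.map C + μ ^ 2 • G.map C := by
          rw [hconj, hconj, hS', hB', hG, ← Matrix.transpose_map, ← Matrix.map_mul]
  -- row vanishing facts
  have hSe0 : ∀ i, S *ᵥ e (Sum.inl i) = 0 := fun i =>
    (keyST _ ((memK2 _).mp (he0 i))).1
  have hTe0 : ∀ i, T *ᵥ e (Sum.inl i) = 0 := fun i =>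
    (keyST _ ((memK2 _).mp (he0 i))).2
  have hBe0 : ∀ i, B *ᵥ e (Sum.inl i) = 0 := by
    intro i
    rw [hBdef, add_mulVec, add_mulVec, hSe0, hTe0]
    simp
  have hSe1 : ∀ i, S *ᵥ e (Sum.inr (Sum.inl i)) = 0 := fun i =>
    (memK1 _).mp (hW1K1 (he1 i))
  have hS'e : ∀ (k l : ι), S' k l = e k ⬝ᵥ (S *ᵥ e l) := fun k l => conj_entry S V k l
  have hB'e : ∀ (k l : ι), B' k l = e k ⬝ᵥ (B *ᵥ e l) := fun k l => conj_entry B V k l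
  have hG'e : ∀ (k l : ι), G k l = e k ⬝ᵥ e l := by
    intro k l
    simp only [hG, mul_apply, dotProduct, transpose_apply]
    rfl
  have hBt : Bᵀ = B := by rw [hBdef, transpose_add, transpose_add, hSt, hTt]
  have hS'row0 : ∀ i l, S' (Sum.inl i) l = 0 := by
    intro i l
    rw [hS'e, dot_symm hSt, hSe0, dotProduct_zero]
  have hB'row0 : ∀ i l, B' (Sum.inl i) l = 0 := by
    intro i l
    rw [hB'e, dot_symm hBt, hBe0, dotProduct_zero]
  have hS'row1 : ∀ i l, S' (Sum.inr (Sum.inl i)) l = 0 := by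
    intro i l
    rw [hS'e, dot_symm hSt, hSe1, dotProduct_zero]
  -- the factored matrix
  set N : Matrix ι ι ℝ[X] := Matrix.of (fun k l =>
    Sum.elim (fun _ : Fin n0 => C (G k l))
      (Sum.elim (fun _ : Fin n1 => C (B' k l) + μ * C (G k l))
        (fun _ : Fin n2 => C (S' k l) + μ * C (B' k l) + μ ^ 2 * C (G k l))) k) with hN
  set v : ι → ℝ[X] := Sum.elim (fun _ : Fin n0 => μ ^ 2)
    (Sum.elim (fun _ : Fin n1 => μ) (fun _ : Fin n2 => 1)) with hv
  have hvN : Q = Matrix.of (fun k l => v k * N k l) := by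
    rw [hQ]
    ext k l
    rcases k with i | i | i <;>
      simp only [Matrix.add_apply, Matrix.smul_apply, Matrix.map_apply, Matrix.of_apply,
        smul_eq_mul, hN, hv, Sum.elim_inl, Sum.elim_inr]
    · rw [hS'row0, hB'row0]
      simp only [map_zero]
      ring
    · rw [hS'row1]
      simp only [map_zero]
      ring
    · ring
  -- determinant identities
  have hprodv : (∏ k, v k) = μ ^ (2 * n0 + n1) := by
    rw [hv, Fintype.prod_sum_type, Fintype.prod_sum_type]
    simp only [Sum.elim_inl, Sum.elim_inr, Finset.prod_const, Finset.card_univ,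
      Fintype.card_fin, one_pow, mul_one]
    rw [← pow_mul, ← pow_add]
  have hdetQN : Q.det = μ ^ (2 * n0 + n1) * N.det := by
    rw [hvN, Matrix.det_mul_column, hprodv]
  have hsub : Q.submatrix σ σ = (Vsq.map C) * Mst * (Vsq.map C)ᵀ := by
    rw [hQdef]
    rw [Matrix.submatrix_mul _ _ σ id σ (Function.bijective_id),
      Matrix.submatrix_mul _ _ σ id id (Function.bijective_id)]
    rw [Matrix.submatrix_id_id, ← Matrix.transpose_submatrix]
    rfl
  have hmapdet : (Vsq.map (C : ℝ →+* ℝ[X])).det = C Vsq.det := by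
    simpa [RingHom.mapMatrix_apply] using (RingHom.map_det (C : ℝ →+* ℝ[X]) Vsq).symm
  have hdetQV : Q.det = C Vsq.det ^ 2 * Mst.det := by
    rw [← Matrix.det_submatrix_equiv_self σ Q, hsub]
    rw [Matrix.det_mul, Matrix.det_mul, Matrix.det_transpose, hmapdet]
    ring
  -- conclude the factorization
  set L := 2 * d - S.rank - (S + T).rank with hL
  have hLeq : 2 * n0 + n1 = L := by omega
  have hCne : (C (Vsq.det ^ 2) : ℝ[X]) ≠ 0 := by
    simp only [ne_eq, Polynomial.C_eq_zero]
    exact pow_ne_zero 2 hdet0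
  set p : ℝ[X] := C ((Vsq.det ^ 2)⁻¹) * N.det with hp
  have hfact : Mst.det = μ ^ L * p := by
    apply mul_left_cancel₀ hCne
    have h1 : C (Vsq.det ^ 2) * Mst.det = μ ^ L * N.det := by
      rw [map_pow, ← hdetQV, hdetQN, hLeq]
    rw [h1, hp]
    have h2 : (C (Vsq.det ^ 2) : ℝ[X]) * (μ ^ L * (C ((Vsq.det ^ 2)⁻¹) * N.det))
        = (C (Vsq.det ^ 2) * C ((Vsq.det ^ 2)⁻¹)) * (μ ^ L * N.det) := by ring
    rw [h2, ← C_mul, mul_inv_cancel₀ (pow_ne_zero 2 hdet0), C_1, one_mul]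
  -- positivity of p at 1
  set N1 : Matrix ι ι ℝ := N.map (eval 1) with hN1def
  have hμeval : (μ : ℝ[X]).eval 1 = 0 := by simp [hμ]
  have hN1entry : N1 = Matrix.of (fun k l =>
      Sum.elim (fun _ : Fin n0 => G k l)
        (Sum.elim (fun _ : Fin n1 => B' k l) (fun _ : Fin n2 => S' k l)) k) := by
    ext k l
    rcases k with i | i | i <;>
      simp [hN1def, hN, Matrix.map_apply, hμeval]
  have hdetN1 : N.det.eval 1 = N1.det := by
    have h := RingHom.map_det (Polynomial.evalRingHom (1:ℝ)) N
    simpa [RingHom.mapMatrix_apply, Polynomial.coe_evalRingHom, hN1def] using h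
  -- grading and block triangularity
  set g : ι → Fin 3 := Sum.elim (fun _ => 0) (Sum.elim (fun _ => 1) (fun _ => 2)) with hg
  have hBT : N1.BlockTriangular g := by
    intro k l hkl
    rw [hN1entry]
    rcases k with i | i | i <;> rcases l with j | j | j <;>
        simp only [hg, Sum.elim_inl, Sum.elim_inr, Matrix.of_apply] at hkl ⊢
    · exact absurd hkl (by decide)
    · exact absurd hkl (by decide)
    · exact absurd hkl (by decide)
    · rw [hB'e, hBe0, dotProduct_zero]
    · exact absurd hkl (by decide)
    · exact absurd hkl (by decide)
    · rw [hS'e, hSe0, dotProduct_zero]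
    · rw [hS'e, hSe1, dotProduct_zero]
    · exact absurd hkl (by decide)
  -- extraction lemmas for grades
  have hg0 : ∀ k : ι, g k = 0 → ∃ i, k = Sum.inl i := by
    rintro (i | i | i) h
    · exact ⟨i, rfl⟩
    · exact absurd h (by simp [hg])
    · exact absurd h (by simp [hg])
  have hg1 : ∀ k : ι, g k = 1 → ∃ i, k = Sum.inr (Sum.inl i) := by
    rintro (i | i | i) h
    · exact absurd h (by simp [hg])
    · exact ⟨i, rfl⟩
    · exact absurd h (by simp [hg])
  have hg2 : ∀ k : ι, g k = 2 → ∃ i, k = Sum.inr (Sum.inr i) := by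
    rintro (i | i | i) h
    · exact absurd h (by simp [hg])
    · exact absurd h (by simp [hg])
    · exact ⟨i, rfl⟩
  -- sums over subtypes are nonzero combinations
  have hliSub : ∀ (a : Fin 3) (x : {k : ι // g k = a} → ℝ),
      (∑ k, x k • e k.val) = 0 → x = 0 := by
    intro a x hx
    have li' : LinearIndependent ℝ (fun k : {k : ι // g k = a} => e k.val) :=
      li.comp Subtype.val Subtype.val_injective
    funext k
    exact Fintype.linearIndependent_iff.mp li' x hx k
  -- the three diagonal blocks
  have hblock0 : 0 < ((N1.toSquareBlock g 0).det) := by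
    set W0 : Matrix {k : ι // g k = 0} (Fin d) ℝ := Matrix.of (fun k => e k.val) with hW0
    have heq : N1.toSquareBlock g 0 = W0 * (1 : Matrix (Fin d) (Fin d) ℝ) * W0ᵀ := by
      ext k l
      rw [conj_entry, one_mulVec]
      obtain ⟨i, hi⟩ := hg0 k.val k.2
      obtain ⟨j, hj⟩ := hg0 l.val l.2
      have hval : (N1.toSquareBlock g 0) k l = N1 k.val l.val := rfl
      rw [hval, hi, hj, hN1entry]
      simp only [Matrix.of_apply, Sum.elim_inl]
      rw [hG'e, ← hi, ← hj]
      rfl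
    rw [heq]
    apply Matrix.PosDef.det_pos
    apply gram_posDef (Matrix.PosDef.one.posSemidef) W0
    intro x hx
    rw [one_mulVec, hW0, transpose_mulVec_sum] at hx
    exact hliSub 0 x hx
  have hblock1 : 0 < ((N1.toSquareBlock g 1).det) := by
    set W' : Matrix {k : ι // g k = 1} (Fin d) ℝ := Matrix.of (fun k => e k.val) with hW'
    have heq : N1.toSquareBlock g 1 = W' * B * W'ᵀ := by
      ext k l
      rw [conj_entry]
      obtain ⟨i, hi⟩ := hg1 k.val k.2
      obtain ⟨j, hj⟩ := hg1 l.val l.2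
      have hval : (N1.toSquareBlock g 1) k l = N1 k.val l.val := rfl
      rw [hval, hi, hj, hN1entry]
      simp only [Matrix.of_apply, Sum.elim_inr, Sum.elim_inl]
      rw [hB'e, ← hi, ← hj]
      rfl
    rw [heq]
    apply Matrix.PosDef.det_pos
    have hBpsd : B.PosSemidef := by
      rw [hBdef]
      exact (hS.add hS).add hT
    apply gram_posDef hBpsd W'
    intro x hx
    rw [hW', transpose_mulVec_sum] at hx
    set z := ∑ k : {k : ι // g k = 1}, x k • e k.val with hz
    obtain ⟨hSz, hTz⟩ := keyB z hx
    have hzK2 : z ∈ K2 := by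
      rw [memK2, add_mulVec, hSz, hTz, add_zero]
    have hzW1 : z ∈ W1 := by
      apply Submodule.sum_mem
      intro k _
      apply Submodule.smul_mem
      obtain ⟨i, hi⟩ := hg1 k.val k.2
      rw [hi]
      exact he1 i
    have hz0 : z = 0 := by
      have h := hdisj1.le_bot ⟨hzK2, hzW1⟩
      simpa using h
    exact hliSub 1 x (by rw [← hz]; exact hz0)
  have hblock2 : 0 < ((N1.toSquareBlock g 2).det) := by
    set W' : Matrix {k : ι // g k = 2} (Fin d) ℝ := Matrix.of (fun k => e k.val) with hW'
    have heq : N1.toSquareBlock g 2 = W' * S * W'ᵀ := by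
      ext k l
      rw [conj_entry]
      obtain ⟨i, hi⟩ := hg2 k.val k.2
      obtain ⟨j, hj⟩ := hg2 l.val l.2
      have hval : (N1.toSquareBlock g 2) k l = N1 k.val l.val := rfl
      rw [hval, hi, hj, hN1entry]
      simp only [Matrix.of_apply, Sum.elim_inr]
      rw [hS'e, ← hi, ← hj]
      rfl
    rw [heq]
    apply Matrix.PosDef.det_pos
    apply gram_posDef hS W'
    intro x hx
    rw [hW', transpose_mulVec_sum] at hx
    set z := ∑ k : {k : ι // g k = 2}, x k • e k.val with hz
    have hzK1 : z ∈ K1 := by rw [memK1]; exact hx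
    have hzW2 : z ∈ W2 := by
      apply Submodule.sum_mem
      intro k _
      apply Submodule.smul_mem
      obtain ⟨i, hi⟩ := hg2 k.val k.2
      rw [hi]
      exact he2 i
    have hz0 : z = 0 := by
      have h := hdisj2.le_bot ⟨hzK1, hzW2⟩
      simpa using h
    exact hliSub 2 x (by rw [← hz]; exact hz0)
  have hdetN1pos : 0 < N1.det := by
    rw [hBT.det]
    apply Finset.prod_pos
    intro a _
    fin_cases a
    · exact hblock0
    · exact hblock1
    · exact hblock2
  refine ⟨p, ?_, ?_⟩
  · rw [hM, hfact, hμ]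
  · rw [hp]
    simp only [eval_mul, eval_C, hdetN1]
    have hq : (0:ℝ) < (Vsq.det ^ 2)⁻¹ := by positivity
    exact mul_pos hq hdetN1pos
end

section
/- Let $H \in \mathbb{R}^{d\times d}$ be symmetric positive semidefinite, $A \in \mathbb{R}^{m\times d}$, $\beta > 0$, and $S = H + \beta A^\top A$. Then the block matrix $\begin{bmatrix} S & -A^\top \\ \beta A & 0 \end{bmatrix}$ has rank equal to $\mathrm{Rank}(S) + \mathrm{Rank}(\beta A^\top A)$. -/
open Matrix

lemma rank_smul_eq {n p : ℕ} (M : Matrix (Fin n) (Fin p) ℝ) {c : ℝ} (hc : c ≠ 0) :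
    (c • M).rank = M.rank := by
  have hr : LinearMap.range (c • M).mulVecLin = LinearMap.range M.mulVecLin := by
    ext v
    constructor
    · rintro ⟨x, rfl⟩
      exact ⟨c • x, by simp [Matrix.mulVecLin_apply, Matrix.smul_mulVec,
        Matrix.mulVec_smul, smul_comm]⟩
    · rintro ⟨x, rfl⟩
      refine ⟨c⁻¹ • x, ?_⟩
      simp [Matrix.mulVecLin_apply, Matrix.smul_mulVec, Matrix.mulVec_smul,
        smul_smul, mul_inv_cancel₀ hc, inv_mul_cancel₀ hc]
  rw [Matrix.rank, Matrix.rank, hr]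

/-- Rank of the KKT-type block matrix `[[S, -Aᵀ], [βA, 0]]` with `S = H + βAᵀA`,
`H ⪰ 0`, `β > 0`, equals `rank S + rank (βAᵀA)`. -/
theorem stmt_2 (d m : ℕ) (H : Matrix (Fin d) (Fin d) ℝ) (A : Matrix (Fin m) (Fin d) ℝ)
    (β : ℝ) (hβ : 0 < β) (hH : H.PosSemidef)
    (S : Matrix (Fin d) (Fin d) ℝ) (hS : S = H + β • (Aᵀ * A)) :
    (Matrix.fromBlocks S (-Aᵀ) (β • A) 0).rank = S.rank + (β • (Aᵀ * A)).rank := by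
  have hβ0 : β ≠ 0 := ne_of_gt hβ
  have hAtA : (Aᵀ * A).PosSemidef := by
    have := Matrix.posSemidef_conjTranspose_mul_self A
    simpa [Matrix.conjTranspose_eq_transpose_of_trivial] using this
  have hSpsd : S.PosSemidef := by
    rw [hS]
    refine Matrix.PosSemidef.of_dotProduct_mulVec_nonneg (hH.1.add ?_) (fun x => ?_)
    · show (β • (Aᵀ * A))ᴴ = β • (Aᵀ * A)
      rw [Matrix.conjTranspose_smul, hAtA.1.eq]
      simp
    · have h1 := hH.dotProduct_mulVec_nonneg x
      have h2 := hAtA.dotProduct_mulVec_nonneg x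
      simp only [Matrix.add_mulVec, dotProduct_add, Matrix.smul_mulVec,
        dotProduct_smul, smul_eq_mul]
      have : (0:ℝ) ≤ β * (star x ⬝ᵥ (Aᵀ * A) *ᵥ x) := mul_nonneg hβ.le h2
      linarith
  -- From `S *ᵥ x = 0` we get `A *ᵥ x = 0`.
  have hAx0 : ∀ x : Fin d → ℝ, S *ᵥ x = 0 → A *ᵥ x = 0 := by
    intro x hx
    have hdot : x ⬝ᵥ S *ᵥ x = 0 := by rw [hx, dotProduct_zero]
    have hHx := hH.dotProduct_mulVec_nonneg x
    have hAAx := hAtA.dotProduct_mulVec_nonneg x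
    rw [hS] at hdot
    simp only [Matrix.add_mulVec, dotProduct_add, Matrix.smul_mulVec,
      dotProduct_smul, smul_eq_mul, star_trivial] at hdot hHx hAAx
    have hzero : x ⬝ᵥ (Aᵀ * A) *ᵥ x = 0 := by nlinarith
    have h0 : (Aᵀ * A) *ᵥ x = 0 := (hAtA.dotProduct_mulVec_zero_iff x).mp (by simpa using hzero)
    have : (A *ᵥ x) ⬝ᵥ (A *ᵥ x) = 0 := by
      rw [← Matrix.mulVec_mulVec] at h0
      calc (A *ᵥ x) ⬝ᵥ (A *ᵥ x) = (x ᵥ* Aᵀ) ⬝ᵥ (A *ᵥ x) := by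
            rw [Matrix.vecMul_transpose]
        _ = x ⬝ᵥ Aᵀ *ᵥ (A *ᵥ x) := (dotProduct_mulVec _ _ _).symm
        _ = 0 := by rw [h0, dotProduct_zero]
    exact (dotProduct_self_eq_zero).mp this
  set M := Matrix.fromBlocks S (-Aᵀ) (β • A) (0 : Matrix (Fin m) (Fin m) ℝ) with hM
  have hker : ∀ x : Fin d → ℝ, ∀ y : Fin m → ℝ,
      (M *ᵥ Sum.elim x y = 0) ↔ (S *ᵥ x = 0 ∧ Aᵀ *ᵥ y = 0) := by
    intro x y
    rw [hM, Matrix.fromBlocks_mulVec]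
    simp only [Sum.elim_comp_inl, Sum.elim_comp_inr, Matrix.zero_mulVec, add_zero,
      Matrix.neg_mulVec, Matrix.smul_mulVec]
    constructor
    · intro h
      have h1 : S *ᵥ x + -(Aᵀ *ᵥ y) = 0 := funext fun i => congrFun h (Sum.inl i)
      have h2 : β • (A *ᵥ x) = 0 := funext fun i => congrFun h (Sum.inr i)
      have hAx : A *ᵥ x = 0 := by
        rcases smul_eq_zero.mp h2 with h | h
        · exact absurd h hβ0
        · exact h
      have hSx : S *ᵥ x = Aᵀ *ᵥ y := by
        have := congrArg (· + Aᵀ *ᵥ y) h1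
        simpa [add_assoc] using this
      have hdot : x ⬝ᵥ S *ᵥ x = 0 := by
        rw [hSx, dotProduct_mulVec, Matrix.vecMul_transpose, hAx, zero_dotProduct]
      have hS0 : S *ᵥ x = 0 := (hSpsd.dotProduct_mulVec_zero_iff x).mp (by simpa using hdot)
      exact ⟨hS0, by rw [← hSx, hS0]⟩
    · rintro ⟨h1, h2⟩
      have hAx : A *ᵥ x = 0 := hAx0 x h1
      funext i
      cases i with
      | inl i => simp [h1, h2]
      | inr i => simp [hAx]
  -- linear equivalence between kernels
  have hmem : ∀ v : Fin d ⊕ Fin m → ℝ, v ∈ LinearMap.ker M.mulVecLin ↔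
      (S *ᵥ (v ∘ Sum.inl) = 0 ∧ Aᵀ *ᵥ (v ∘ Sum.inr) = 0) := by
    intro v
    rw [LinearMap.mem_ker, Matrix.mulVecLin_apply, ← hker (v ∘ Sum.inl) (v ∘ Sum.inr)]
    have : Sum.elim (v ∘ Sum.inl) (v ∘ Sum.inr) = v := by
      funext i; cases i <;> rfl
    rw [this]
  let E : (LinearMap.ker M.mulVecLin) ≃ₗ[ℝ]
      (LinearMap.ker S.mulVecLin) × (LinearMap.ker Aᵀ.mulVecLin) :=
    { toFun := fun v => (⟨v.1 ∘ Sum.inl, by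
        rw [LinearMap.mem_ker, Matrix.mulVecLin_apply]
        exact ((hmem v.1).mp v.2).1⟩,
        ⟨v.1 ∘ Sum.inr, by
        rw [LinearMap.mem_ker, Matrix.mulVecLin_apply]
        exact ((hmem v.1).mp v.2).2⟩)
      invFun := fun p => ⟨Sum.elim p.1.1 p.2.1, by
        rw [hmem]
        have h1 : S *ᵥ p.1.1 = 0 := by
          have := p.1.2; rwa [LinearMap.mem_ker, Matrix.mulVecLin_apply] at this
        have h2 : Aᵀ *ᵥ p.2.1 = 0 := by
          have := p.2.2; rwa [LinearMap.mem_ker, Matrix.mulVecLin_apply] at this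
        exact ⟨by rw [Sum.elim_comp_inl]; exact h1, by rw [Sum.elim_comp_inr]; exact h2⟩⟩
      map_add' := fun v w => by ext i <;> rfl
      map_smul' := fun c v => by ext i <;> rfl
      left_inv := fun v => by
        ext i
        cases i <;> rfl
      right_inv := fun p => by
        rfl }
  have hEq : Module.finrank ℝ (LinearMap.ker M.mulVecLin) =
      Module.finrank ℝ (LinearMap.ker S.mulVecLin) +
      Module.finrank ℝ (LinearMap.ker Aᵀ.mulVecLin) := by
    rw [E.finrank_eq, Module.finrank_prod]
  -- rank-nullity for the three matrices
  have hrnM : M.rank + Module.finrank ℝ (LinearMap.ker M.mulVecLin) = d + m := by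
    have := LinearMap.finrank_range_add_finrank_ker M.mulVecLin
    simpa [Matrix.rank, Fintype.card_sum] using this
  have hrnS : S.rank + Module.finrank ℝ (LinearMap.ker S.mulVecLin) = d := by
    have := LinearMap.finrank_range_add_finrank_ker S.mulVecLin
    simpa [Matrix.rank] using this
  have hrnA : Aᵀ.rank + Module.finrank ℝ (LinearMap.ker Aᵀ.mulVecLin) = m := by
    have := LinearMap.finrank_range_add_finrank_ker Aᵀ.mulVecLin
    simpa [Matrix.rank] using this
  have hrankA : (β • (Aᵀ * A)).rank = Aᵀ.rank := by
    rw [rank_smul_eq _ hβ0, Matrix.rank_transpose_mul_self, Matrix.rank_transpose]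
  rw [hrankA]
  omega
end

section
/- Let $\kappa > 3/4$ and $\gamma \in [0,1]$ be real numbers, and suppose $\lambda \in \mathbb{C}$ satisfies $\kappa \lambda^2 - (2\kappa - \gamma - 1)\lambda + \kappa - 1 = 0$. Then either $|\lambda| < 1$ or $\lambda = 1$. -/
/-- A complex root of `κλ² - (2κ - γ - 1)λ + (κ-1) = 0` with `κ > 3/4`, `γ ∈ [0,1]`
satisfies `|λ| < 1` or `λ = 1`. -/
theorem stmt_4 (κ γ : ℝ) (hκ : 3 / 4 < κ) (hγ0 : 0 ≤ γ) (hγ1 : γ ≤ 1)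
    (lam : ℂ)
    (hroot : (κ : ℂ) * lam ^ 2 - ((2 * κ - γ - 1 : ℝ) : ℂ) * lam + ((κ - 1 : ℝ) : ℂ) = 0) :
    ‖lam‖ < 1 ∨ lam = 1 := by
  set a := lam.re with ha
  set b := lam.im with hb
  have h1 : κ * (a * a - b * b) - (2 * κ - γ - 1) * a + (κ - 1) = 0 := by
    have := congrArg Complex.re hroot
    simp [Complex.mul_re, Complex.mul_im, pow_two, ← ha, ← hb] at this
    linarith [this]
  have h2 : κ * (2 * a * b) - (2 * κ - γ - 1) * b = 0 := by
    have := congrArg Complex.im hroot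
    simp [Complex.mul_re, Complex.mul_im, pow_two, ← ha, ← hb] at this
    linarith [this]
  have habs : ∀ h : a * a + b * b < 1, ‖lam‖ < 1 := by
    intro h
    have hsq : ‖lam‖ ^ 2 = a * a + b * b := by
      rw [Complex.sq_norm, Complex.normSq_apply]
    nlinarith [norm_nonneg lam, hsq]
  by_cases hb0 : b = 0
  · rw [hb0] at h1
    rcases lt_trichotomy a 1 with hlt | heq | hgt
    · left
      apply habs
      have hma : -1 < a := by nlinarith [sq_nonneg (a + 1)]
      nlinarith
    · right
      apply Complex.ext <;> simp [← ha, ← hb, heq, hb0]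
    · exfalso
      nlinarith [sq_nonneg (a - 1)]
  · left
    apply habs
    have h2' : 2 * κ * a = 2 * κ - γ - 1 := by
      have hf : b * (2 * κ * a - (2 * κ - γ - 1)) = 0 := by ring_nf; nlinarith [h2]
      rcases mul_eq_zero.mp hf with h | h
      · exact absurd h hb0
      · linarith
    have key : κ * (a * a + b * b) = κ - 1 := by linear_combination -h1 + a * h2'
    nlinarith [key]
end

section
/- Let $H_{12} \in \mathbb{R}^{d_1\times d_2}$ with all eigenvalues of $H_{12}^\top H_{12}$ in $[0,1]$, and let $\sigma_1 = \rho(H_{12}^\top H_{12})$. Define $M_3 = \frac{1}{2}\begin{bmatrix} H_{12}H_{12}^\top & -H_{12} \\ -H_{12}^\top & H_{12}^\top H_{12} \end{bmatrix}$. Then $\rho(M_3) = (\sigma_1 + \sqrt{\sigma_1})/2 \ge \sigma_1$. -/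
open Matrix Polynomial

section Helpers

variable {K : Type*} [Field K]
variable {n m : Type*} [Fintype n] [DecidableEq n] [Fintype m] [DecidableEq m]

lemma my_mem_spectrum_iff (M : Matrix n n K) (μ : K) :
    μ ∈ spectrum K M ↔ ∃ v, v ≠ 0 ∧ M *ᵥ v = μ • v := by
  rw [spectrum.mem_iff, Matrix.isUnit_iff_isUnit_det, isUnit_iff_ne_zero, not_not,
    ← Matrix.exists_mulVec_eq_zero_iff]
  constructor
  · rintro ⟨v, hv, h⟩
    refine ⟨v, hv, ?_⟩
    rw [Matrix.sub_mulVec, sub_eq_zero] at h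
    rw [← h, Matrix.algebraMap_eq_diagonal]
    ext i
    simp [Matrix.mulVec_diagonal]
  · rintro ⟨v, hv, h⟩
    refine ⟨v, hv, ?_⟩
    rw [Matrix.sub_mulVec, sub_eq_zero, h, Matrix.algebraMap_eq_diagonal]
    ext i
    simp [Matrix.mulVec_diagonal]

lemma my_map_sub_algebraMap (M : Matrix n n ℝ) (r : ℝ) :
    (algebraMap ℝ (Matrix n n ℝ) r - M).map (algebraMap ℝ ℂ) =
      algebraMap ℂ (Matrix n n ℂ) (r : ℂ) - M.map (algebraMap ℝ ℂ) := by
  ext i j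
  simp [Matrix.algebraMap_eq_diagonal, Matrix.diagonal, Matrix.map_apply]
  split <;> simp

lemma my_mem_spectrum_map_iff (M : Matrix n n ℝ) (r : ℝ) :
    (r : ℂ) ∈ spectrum ℂ (M.map (algebraMap ℝ ℂ)) ↔ r ∈ spectrum ℝ M := by
  rw [spectrum.mem_iff, spectrum.mem_iff, Matrix.isUnit_iff_isUnit_det,
    Matrix.isUnit_iff_isUnit_det, isUnit_iff_ne_zero, isUnit_iff_ne_zero,
    ← my_map_sub_algebraMap]
  have hd := RingHom.map_det (algebraMap ℝ ℂ) (algebraMap ℝ (Matrix n n ℝ) r - M)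
  rw [RingHom.mapMatrix_apply] at hd
  rw [← hd]
  simp

lemma my_spectrum_fromBlocks_diag (A : Matrix m m K) (D : Matrix n n K) :
    spectrum K (Matrix.fromBlocks A 0 0 D) = spectrum K A ∪ spectrum K D := by
  ext z
  have h1 : algebraMap K (Matrix (m ⊕ n) (m ⊕ n) K) z - Matrix.fromBlocks A 0 0 D =
      Matrix.fromBlocks (algebraMap K (Matrix m m K) z - A) 0 0
        (algebraMap K (Matrix n n K) z - D) := by
    ext (i|i) (j|j) <;>
      simp [Matrix.algebraMap_eq_diagonal, Matrix.diagonal, Matrix.one_apply]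
  simp only [Set.mem_union, spectrum.mem_iff, h1]
  rw [Matrix.isUnit_fromBlocks_zero₂₁]
  tauto

lemma my_spectrum_swap (F : Matrix m n K) (G : Matrix n m K) {z : K} (hz : z ≠ 0)
    (h : z ∈ spectrum K (F * G)) : z ∈ spectrum K (G * F) := by
  rw [spectrum.mem_iff] at h ⊢
  intro hU
  apply h
  obtain ⟨u, hu⟩ := hU
  set C : Matrix n n K := ↑u⁻¹ with hC
  have hu1 : (algebraMap K (Matrix n n K) z - G * F) * C = 1 := by rw [← hu]; exact u.mul_inv
  rw [Algebra.algebraMap_eq_smul_one] at hu1 ⊢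
  rw [Matrix.isUnit_iff_isUnit_det]
  apply Matrix.isUnit_det_of_right_inverse (B := z⁻¹ • (1 + F * C * G))
  have hcomm : (z • 1 - F * G) * F = F * (z • (1 : Matrix n n K) - G * F) := by
    rw [Matrix.sub_mul, Matrix.mul_sub, Matrix.smul_mul, Matrix.mul_smul,
      Matrix.one_mul, Matrix.mul_one, Matrix.mul_assoc]
  calc (z • 1 - F * G) * (z⁻¹ • (1 + F * C * G))
      = z⁻¹ • ((z • 1 - F * G) + ((z • 1 - F * G) * F) * (C * G)) := by
        rw [Matrix.mul_smul, Matrix.mul_add, Matrix.mul_one, Matrix.mul_assoc F C G,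
          Matrix.mul_assoc]
    _ = z⁻¹ • ((z • 1 - F * G) + F * (((z • (1 : Matrix n n K) - G * F)) * C) * G) := by
        rw [hcomm, Matrix.mul_assoc F _ (C * G), Matrix.mul_assoc, Matrix.mul_assoc]
    _ = 1 := by
        rw [hu1, Matrix.mul_one, sub_add_cancel, smul_smul, inv_mul_cancel₀ hz, one_smul]

open scoped ComplexOrder in
lemma my_im_eq_zero {B : Matrix n n ℝ} (hB : Bᵀ = B) {z : ℂ}
    {v : n → ℂ} (hv : v ≠ 0) (heig : (B.map (algebraMap ℝ ℂ)) *ᵥ v = z • v) :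
    z.im = 0 := by
  set Bc := B.map (algebraMap ℝ ℂ) with hBc
  set q : ℂ := dotProduct (star v) v with hq
  have hq0 : q ≠ 0 := fun h => hv (dotProduct_star_self_eq_zero.1 h)
  have hqconj : (starRingEnd ℂ) q = q := by
    simp [hq, dotProduct, map_sum, mul_comm]
  have expand : dotProduct (star v) (Bc *ᵥ v) =
      ∑ i, ∑ j, star (v i) * Bc i j * v j := by
    simp [dotProduct, Matrix.mulVec, Finset.mul_sum, mul_assoc]
  have hsym : (starRingEnd ℂ) (dotProduct (star v) (Bc *ᵥ v)) =
      dotProduct (star v) (Bc *ᵥ v) := by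
    rw [expand]
    simp only [map_sum, _root_.map_mul]
    rw [Finset.sum_comm]
    refine Finset.sum_congr rfl fun i _ => Finset.sum_congr rfl fun j _ => ?_
    have h1 : (starRingEnd ℂ) (star (v j)) = v j := by
      rw [Complex.star_def, Complex.conj_conj]
    have h2 : (starRingEnd ℂ) (Bc j i) = Bc i j := by
      have hb : B j i = B i j := by nth_rewrite 1 [← hB]; rfl
      simp only [hBc, Matrix.map_apply, Complex.coe_algebraMap, Complex.conj_ofReal, hb]
    have h3 : (starRingEnd ℂ) (v i) = star (v i) := rfl
    rw [h1, h2, h3]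
    ring
  have heq : dotProduct (star v) (Bc *ᵥ v) = z * q := by
    rw [heig, dotProduct_smul, smul_eq_mul]
  rw [heq, _root_.map_mul, hqconj] at hsym
  have hzz : (starRingEnd ℂ) z = z := mul_right_cancel₀ hq0 hsym
  exact Complex.conj_eq_iff_im.mp hzz

end Helpers

/-- Spectral radius of a real matrix: the supremum of the moduli of its complex
eigenvalues. -/
noncomputable def specRad {n : ℕ} (M : Matrix (Fin n) (Fin n) ℝ) : ℝ :=
  sSup ((fun z : ℂ => ‖z‖) '' spectrum ℂ (M.map (algebraMap ℝ ℂ)))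

/-- If all eigenvalues of `H₁₂ᵀH₁₂` lie in `[0,1]` and `σ₁` is the largest one, then
`M₃ = ½ [[H₁₂H₁₂ᵀ, -H₁₂],[-H₁₂ᵀ, H₁₂ᵀH₁₂]]` satisfies
`ρ(M₃) = (σ₁ + √σ₁)/2 ≥ σ₁`. -/
theorem stmt_9 (d₁ d₂ : ℕ) (hd : d₂ ≤ d₁) (H₁₂ : Matrix (Fin d₁) (Fin d₂) ℝ)
    (hspec : spectrum ℝ (H₁₂ᵀ * H₁₂) ⊆ Set.Icc (0 : ℝ) 1)
    (σ₁ : ℝ) (hσ₁ : IsGreatest (spectrum ℝ (H₁₂ᵀ * H₁₂)) σ₁) :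
    specRad (((1 / 2 : ℝ) •
        Matrix.fromBlocks (H₁₂ * H₁₂ᵀ) (-H₁₂) (-H₁₂ᵀ) (H₁₂ᵀ * H₁₂)).reindex
        finSumFinEquiv finSumFinEquiv) = (σ₁ + Real.sqrt σ₁) / 2 ∧
    σ₁ ≤ (σ₁ + Real.sqrt σ₁) / 2 := by
  have hσicc : σ₁ ∈ Set.Icc (0:ℝ) 1 := hspec hσ₁.1
  have hσ0 : 0 ≤ σ₁ := hσicc.1
  have hσ1 : σ₁ ≤ 1 := hσicc.2
  have hsq0 : 0 ≤ Real.sqrt σ₁ := Real.sqrt_nonneg _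
  have hsqsq : Real.sqrt σ₁ * Real.sqrt σ₁ = σ₁ := Real.mul_self_sqrt hσ0
  set lam : ℝ := (σ₁ + Real.sqrt σ₁) / 2 with hlam
  -- the real block matrix on the sum type
  set M₀ : Matrix (Fin d₁ ⊕ Fin d₂) (Fin d₁ ⊕ Fin d₂) ℝ :=
    (1 / 2 : ℝ) • Matrix.fromBlocks (H₁₂ * H₁₂ᵀ) (-H₁₂) (-H₁₂ᵀ) (H₁₂ᵀ * H₁₂) with hM₀
  set f : ℝ →+* ℂ := algebraMap ℝ ℂ with hf
  set Hc : Matrix (Fin d₁) (Fin d₂) ℂ := H₁₂.map f with hHc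
  set Nc : Matrix (Fin d₁ ⊕ Fin d₂) (Fin d₁ ⊕ Fin d₂) ℂ :=
    Matrix.fromBlocks 0 Hc Hcᵀ 0 with hNc
  set Mc : Matrix (Fin d₁ ⊕ Fin d₂) (Fin d₁ ⊕ Fin d₂) ℂ := M₀.map f with hMc
  -- step 0 : get rid of the reindex
  have hspec0 : spectrum ℂ
      ((((1 / 2 : ℝ) •
        Matrix.fromBlocks (H₁₂ * H₁₂ᵀ) (-H₁₂) (-H₁₂ᵀ) (H₁₂ᵀ * H₁₂)).reindex
        finSumFinEquiv finSumFinEquiv).map (algebraMap ℝ ℂ)) = spectrum ℂ Mc := by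
    have : (((M₀).reindex finSumFinEquiv finSumFinEquiv).map (algebraMap ℝ ℂ)) =
        (Matrix.reindexAlgEquiv ℂ ℂ finSumFinEquiv) Mc := by
      simp only [Matrix.reindexAlgEquiv_apply, Matrix.reindex_apply, Matrix.submatrix_map, hMc, hf]
    rw [← hM₀, this, AlgEquiv.spectrum_eq]
  -- step 1 : Mc as a polynomial in Nc
  have hNc2 : Nc * Nc = Matrix.fromBlocks (Hc * Hcᵀ) 0 0 (Hcᵀ * Hc) := by
    rw [hNc, Matrix.fromBlocks_multiply]
    simp
  have hMceq : Mc = (1/2 : ℂ) • (Nc * Nc - Nc) := by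
    rw [hNc2, hNc, hMc, hM₀, hHc]
    ext (i|i) (j|j) <;>
      simp [Matrix.map_apply, Matrix.mul_apply, Complex.coe_algebraMap, hf] <;>
      push_cast <;> ring
  set p : ℂ[X] := Polynomial.C (1/2 : ℂ) * (Polynomial.X^2 - Polynomial.X) with hp
  have haeval : (Polynomial.aeval Nc) p = Mc := by
    rw [hp, hMceq]
    rw [_root_.map_mul, map_sub, map_pow, Polynomial.aeval_X, Polynomial.aeval_C,
      Algebra.algebraMap_eq_smul_one, smul_mul_assoc, Matrix.one_mul, sq]
  have hdeg : 0 < p.degree := by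
    have h2 : p.degree = 2 := by
      rw [hp, Polynomial.degree_C_mul (by norm_num : (1/2 : ℂ) ≠ 0)]
      compute_degree!
    rw [h2]
    decide
  have hspecMc : spectrum ℂ Mc = (fun μ => Polynomial.eval μ p) '' spectrum ℂ Nc := by
    rw [← haeval]
    exact spectrum.map_polynomial_aeval_of_degree_pos Nc p hdeg
  -- step 2 : bound on the spectrum of Nc
  have hA_bound : ∀ z ∈ spectrum ℂ (Hcᵀ * Hc), ‖z‖ ≤ σ₁ := by
    intro z hz
    have hAt : (H₁₂ᵀ * H₁₂)ᵀ = H₁₂ᵀ * H₁₂ := by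
      rw [Matrix.transpose_mul, Matrix.transpose_transpose]
    have hmap : Hcᵀ * Hc = (H₁₂ᵀ * H₁₂).map f := by
      rw [Matrix.map_mul, hHc, Matrix.transpose_map]
    rw [hmap] at hz
    obtain ⟨v, hv, heig⟩ := (my_mem_spectrum_iff _ _).1 hz
    have him := my_im_eq_zero hAt hv heig
    have hzre : z = (z.re : ℂ) := Complex.ext rfl (by simp [him])
    rw [hzre] at hz ⊢
    rw [my_mem_spectrum_map_iff] at hz
    rw [Complex.norm_real, Real.norm_eq_abs, abs_of_nonneg (hspec hz).1]
    exact hσ₁.2 hz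
  have hN_bound : ∀ μ ∈ spectrum ℂ Nc, ‖μ‖ ≤ Real.sqrt σ₁ := by
    intro μ hμ
    have h2 : μ^2 ∈ spectrum ℂ (Nc * Nc) := by
      have h3 : μ^2 ∈ spectrum ℂ ((Polynomial.aeval Nc) ((Polynomial.X : ℂ[X])^2)) :=
        spectrum.subset_polynomial_aeval Nc ((Polynomial.X : ℂ[X])^2) ⟨μ, hμ, by simp⟩
      simpa [map_pow, Polynomial.aeval_X, sq] using h3
    rw [hNc2, my_spectrum_fromBlocks_diag] at h2
    have habs : ‖μ^2‖ ≤ σ₁ := by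
      rcases h2 with h | h
      · rcases eq_or_ne (μ^2) 0 with h0 | h0
        · rw [h0]
          simpa using hσ0
        · exact hA_bound _ (my_spectrum_swap Hc Hcᵀ h0 h)
      · exact hA_bound _ h
    rw [norm_pow] at habs
    calc ‖μ‖ = Real.sqrt (‖μ‖ ^ 2) :=
          (Real.sqrt_sq (norm_nonneg μ)).symm
      _ ≤ Real.sqrt σ₁ := Real.sqrt_le_sqrt habs
  -- step 3 : upper bound for the spectral radius
  have hub : ∀ w ∈ (fun z : ℂ => ‖z‖) '' spectrum ℂ Mc, w ≤ lam := by
    rintro w ⟨z, hz, rfl⟩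
    rw [hspecMc] at hz
    obtain ⟨μ, hμ, rfl⟩ := hz
    have hb := hN_bound μ hμ
    have hb2 : ‖μ‖ ^ 2 ≤ σ₁ := by nlinarith [norm_nonneg μ, hsq0]
    have hev : Polynomial.eval μ p = (1/2 : ℂ) * (μ^2 - μ) := by simp [hp]
    show ‖Polynomial.eval μ p‖ ≤ lam
    rw [hev]
    have habs2 : ‖(1/2 : ℂ) * (μ^2 - μ)‖
        ≤ (1/2) * (‖μ‖^2 + ‖μ‖) := by
      rw [norm_mul]
      have : ‖μ^2 - μ‖ ≤ ‖μ‖^2 + ‖μ‖ := by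
        calc ‖μ^2 - μ‖ ≤ ‖μ^2‖ + ‖-μ‖ := by
              rw [sub_eq_add_neg]; exact norm_add_le _ _
          _ = ‖μ‖^2 + ‖μ‖ := by rw [norm_pow, norm_neg]
      have h12 : ‖(1/2 : ℂ)‖ = 1/2 := by rw [norm_div, norm_one, Complex.norm_ofNat]
      rw [h12]
      linarith
    calc ‖(1/2 : ℂ) * (μ^2 - μ)‖
        ≤ (1/2) * (‖μ‖^2 + ‖μ‖) := habs2
      _ ≤ lam := by rw [hlam]; linarith
  -- step 4 : membership of lam
  obtain ⟨v, hv, hAv⟩ := (my_mem_spectrum_iff _ _).1 hσ₁.1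
  have hmem : lam ∈ spectrum ℝ M₀ := by
    rcases eq_or_lt_of_le hσ0 with hz0 | hpos
    · -- σ₁ = 0
      have hw : H₁₂ *ᵥ v = 0 := by
        have h1 : (H₁₂ *ᵥ v) ⬝ᵥ (H₁₂ *ᵥ v) = 0 := by
          rw [Matrix.dotProduct_mulVec, ← Matrix.mulVec_transpose,
            Matrix.mulVec_mulVec, hAv, ← hz0, zero_smul, zero_dotProduct]
        exact dotProduct_self_eq_zero.1 h1
      refine (my_mem_spectrum_iff _ _).2 ⟨Sum.elim 0 v, ?_, ?_⟩
      · intro h0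
        exact hv (funext fun i => congrFun h0 (Sum.inr i))
      · have : Matrix.fromBlocks (H₁₂ * H₁₂ᵀ) (-H₁₂) (-H₁₂ᵀ) (H₁₂ᵀ * H₁₂) *ᵥ
            (Sum.elim 0 v) = 0 := by
          rw [Matrix.fromBlocks_mulVec]
          simp only [Sum.elim_comp_inl, Sum.elim_comp_inr]
          have ht : (H₁₂ * H₁₂ᵀ) *ᵥ 0 + (-H₁₂) *ᵥ v = 0 := by
            rw [Matrix.mulVec_zero, Matrix.neg_mulVec, hw, neg_zero, zero_add]
          have hb : (-H₁₂ᵀ) *ᵥ 0 + (H₁₂ᵀ * H₁₂) *ᵥ v = 0 := by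
            rw [Matrix.mulVec_zero, hAv, ← hz0, zero_smul, zero_add]
          rw [ht, hb]
          funext i
          cases i <;> rfl
        rw [hM₀, Matrix.smul_mulVec, this, smul_zero, hlam, ← hz0,
          Real.sqrt_zero]
        simp
    · -- σ₁ > 0
      set s : ℝ := Real.sqrt σ₁ with hs
      have hspos : 0 < s := Real.sqrt_pos.2 hpos
      set u : (Fin d₁ ⊕ Fin d₂) → ℝ := Sum.elim (H₁₂ *ᵥ v) ((-s) • v) with hu
      refine (my_mem_spectrum_iff _ _).2 ⟨u, ?_, ?_⟩
      · intro h0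
        apply hv
        have hvz : (-s) • v = 0 := funext fun i => congrFun h0 (Sum.inr i)
        have := smul_eq_zero.1 hvz
        rcases this with h | h
        · exact absurd h (neg_ne_zero.2 (ne_of_gt hspos))
        · exact h
      · have hkey : Matrix.fromBlocks (H₁₂ * H₁₂ᵀ) (-H₁₂) (-H₁₂ᵀ) (H₁₂ᵀ * H₁₂) *ᵥ u
            = (σ₁ + s) • u := by
          rw [hu, Matrix.fromBlocks_mulVec]
          simp only [Sum.elim_comp_inl, Sum.elim_comp_inr]
          have htop : (H₁₂ * H₁₂ᵀ) *ᵥ (H₁₂ *ᵥ v) + (-H₁₂) *ᵥ ((-s) • v)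
              = (σ₁ + s) • (H₁₂ *ᵥ v) := by
            have e1 : (H₁₂ * H₁₂ᵀ) *ᵥ (H₁₂ *ᵥ v) = σ₁ • (H₁₂ *ᵥ v) := by
              rw [Matrix.mulVec_mulVec, Matrix.mul_assoc, ← Matrix.mulVec_mulVec, hAv,
                Matrix.mulVec_smul]
            have e2 : (-H₁₂) *ᵥ ((-s) • v) = s • (H₁₂ *ᵥ v) := by
              rw [Matrix.neg_mulVec, Matrix.mulVec_smul, neg_smul, neg_neg]
            rw [e1, e2, ← add_smul]
          have hbot : (-H₁₂ᵀ) *ᵥ (H₁₂ *ᵥ v) + (H₁₂ᵀ * H₁₂) *ᵥ ((-s) • v)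
              = (σ₁ + s) • ((-s) • v) := by
            have e3 : (-H₁₂ᵀ) *ᵥ (H₁₂ *ᵥ v) = (-σ₁) • v := by
              rw [Matrix.neg_mulVec, Matrix.mulVec_mulVec, hAv, ← neg_smul]
            have e4 : (H₁₂ᵀ * H₁₂) *ᵥ ((-s) • v) = ((-s) * σ₁) • v := by
              rw [Matrix.mulVec_smul, hAv, smul_smul]
            rw [e3, e4, ← add_smul, smul_smul]
            congr 1
            linear_combination hsqsq
          rw [htop, hbot]
          funext i
          cases i <;> rfl
        rw [hM₀, Matrix.smul_mulVec, hkey, smul_smul, hlam, hs]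
        congr 1
        ring
  have hmemC : (lam : ℂ) ∈ spectrum ℂ Mc := (my_mem_spectrum_map_iff M₀ lam).2 hmem
  have hlam0 : 0 ≤ lam := by rw [hlam]; positivity
  have hgreat : IsGreatest ((fun z : ℂ => ‖z‖) '' spectrum ℂ Mc) lam :=
    ⟨⟨(lam : ℂ), hmemC, by exact Complex.norm_of_nonneg hlam0⟩, hub⟩
  constructor
  · show sSup _ = lam
    rw [hspec0]
    exact hgreat.csSup_eq
  · have hsle : Real.sqrt σ₁ ≤ 1 := by
      rw [show (1:ℝ) = Real.sqrt 1 by rw [Real.sqrt_one]]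
      exact Real.sqrt_le_sqrt hσ1
    nlinarith [hsqsq, hsq0]
end
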